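/- For a partition λ of length at most n and variables u₁,…,uₙ, the branching rule S_λ(u₁,…,u_{n−1},uₙ) = Σ_{μ ≺ λ} S_μ(u₁,…,u_{n−1}) · uₙ^{|λ|−|μ|} holds, where the sum runs over partitions μ = (μ₁,…,μ_{n−1}) interlacing λ, i.e., λ₁ ≥ μ₁ ≥ λ₂ ≥ μ₂ ≥ ⋯ ≥ μ_{n−1} ≥ λₙ. -/

import Mathlib

/-- Complete homogeneous symmetric polynomial of degree `m` in `n` real variables. -/
noncomputable def hh (n m : ℕ) (u : Fin n → ℝ) : ℝ :=
  ∑ c ∈ Finset.Nat.antidiagonalTuple n m, ∏ i, u i ^ c i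

/-- `hh` extended by `0` to negative degrees. -/
noncomputable def hZ (n : ℕ) (m : ℤ) (u : Fin n → ℝ) : ℝ :=
  if 0 ≤ m then hh n m.toNat u else 0

/-- Schur polynomial of the partition `lam` (of length at most `l`), evaluated at `k`
real variables, defined via the Jacobi–Trudi determinant. -/
noncomputable def schur {l : ℕ} (lam : Fin l → ℕ) {k : ℕ} (u : Fin k → ℝ) : ℝ :=
  Matrix.det (Matrix.of fun i j : Fin l => hZ k ((lam i : ℤ) - (i : ℤ) + (j : ℤ)) u)

/-!
Write `H_m` and `h_m` for the complete homogeneous polynomials in `(u, x)` and in `u`. From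
`H_m = h_m + x H_{m-1}` one gets, for `λ_{i+1} ≤ λ_i`,
`H_{λ_i - i + j} = ∑_{λ_{i+1} ≤ ν ≤ λ_i} x^{λ_i - ν} h_{ν - i + j} + x^{λ_i - λ_{i+1} + 1} H_{λ_{i+1} - (i+1) + j}`.
So after subtracting from every row of the Jacobi–Trudi matrix of `λ` the right multiple of the
next row (the last row needs no correction, its tail has negative degree), each row is a sum over
`ν_i ∈ [λ_{i+1}, λ_i]`, and multilinearity of the determinant gives
`S_λ(u, x) = ∑_{ν ≺ λ} x^{|λ| - |ν|} S_ν(u)`, where `ν` has as many parts as `λ`.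
With `n` variables and `n + 1` parts, `S_ν(u) = 0` unless `ν_{n+1} = 0` (induction on the number
of variables, using the same expansion), and a trailing zero part does not change `S_ν`.
-/

open Finset

section CompleteHomogeneous

variable {k : ℕ}

lemma hZ_of_neg {m : ℤ} (hm : m < 0) (u : Fin k → ℝ) : hZ k m u = 0 :=
  if_neg (by omega)

lemma hZ_zero (u : Fin k → ℝ) : hZ k 0 u = 1 := by
  simp [hZ, hh, Finset.Nat.antidiagonalTuple_zero_right]

lemma hZ_no_vars_of_pos {m : ℤ} (hm : 0 < m) (u : Fin 0 → ℝ) : hZ 0 m u = 0 := by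
  obtain ⟨s, hs⟩ : ∃ s, m.toNat = s + 1 := ⟨m.toNat - 1, by omega⟩
  simp [hZ, hm.le, hs, hh, Finset.Nat.antidiagonalTuple_zero_succ]

lemma hh_snoc (m : ℕ) (u : Fin k → ℝ) (x : ℝ) :
    hh (k + 1) m (Fin.snoc u x) = ∑ t ∈ range (m + 1), x ^ t * hh k (m - t) u := by
  simp only [hh, mul_sum]
  rw [sum_sigma']
  refine sum_nbij' (fun c => ⟨c (Fin.last k), Fin.init c⟩)
    (fun p => Fin.snoc p.2 p.1) ?_ ?_ ?_ ?_ ?_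
  · intro c hc
    simp only [mem_sigma, mem_range, Nat.mem_antidiagonalTuple, Fin.sum_univ_castSucc] at hc ⊢
    simp only [Fin.init]
    omega
  · rintro ⟨t, c⟩ hc
    simp only [mem_sigma, mem_range, Nat.mem_antidiagonalTuple, Fin.sum_univ_castSucc,
      Fin.snoc_castSucc, Fin.snoc_last] at hc ⊢
    omega
  · intro c _
    exact Fin.snoc_init_self c
  · rintro ⟨t, c⟩ _
    simp [Fin.init_snoc]
  · intro c _
    simp [Fin.prod_univ_castSucc, Fin.init, mul_comm]

lemma hh_succ_snoc (m : ℕ) (u : Fin k → ℝ) (x : ℝ) :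
    hh (k + 1) (m + 1) (Fin.snoc u x) = hh k (m + 1) u + x * hh (k + 1) m (Fin.snoc u x) := by
  rw [hh_snoc, hh_snoc, sum_range_succ', mul_sum]
  simp only [pow_succ, Nat.add_sub_add_right, pow_zero, one_mul, Nat.sub_zero]
  rw [add_comm]
  congr 1
  exact sum_congr rfl fun t _ => by ring

lemma hZ_snoc (u : Fin k → ℝ) (x : ℝ) (m : ℤ) :
    hZ (k + 1) m (Fin.snoc u x) = hZ k m u + x * hZ (k + 1) (m - 1) (Fin.snoc u x) := by
  rcases lt_trichotomy m 0 with hm | rfl | hm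
  · simp [hZ_of_neg hm, hZ_of_neg (show m - 1 < 0 by omega)]
  · simp [hZ_zero, hZ_of_neg (show (-1 : ℤ) < 0 by omega)]
  · obtain ⟨m, rfl⟩ : ∃ m' : ℕ, m = (m' + 1 : ℕ) := ⟨m.toNat - 1, by omega⟩
    rw [show ((m + 1 : ℕ) : ℤ) - 1 = m by push_cast; ring]
    simp only [hZ, Int.natCast_nonneg, if_true, Int.toNat_natCast, hh_succ_snoc]

lemma hZ_snoc_eq_sum_range_add (u : Fin k → ℝ) (x : ℝ) (m : ℤ) (d : ℕ) :
    hZ (k + 1) m (Fin.snoc u x)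
      = ∑ t ∈ range d, x ^ t * hZ k (m - t) u + x ^ d * hZ (k + 1) (m - d) (Fin.snoc u x) := by
  induction d with
  | zero => simp
  | succ d ih =>
    rw [ih, hZ_snoc u x (m - d), sum_range_succ]
    push_cast
    ring_nf

lemma hZ_snoc_eq_sum_Icc_add (u : Fin k → ℝ) (x : ℝ) {a b : ℕ} (hab : a ≤ b + 1) (c : ℤ) :
    hZ (k + 1) (b + c) (Fin.snoc u x)
      = ∑ ν ∈ Icc a b, x ^ (b - ν) * hZ k (ν + c) u
        + x ^ (b + 1 - a) * hZ (k + 1) (a - 1 + c) (Fin.snoc u x) := by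
  rw [hZ_snoc_eq_sum_range_add u x _ (b + 1 - a)]
  congr 1
  · refine sum_nbij' (fun t => b - t) (fun ν => b - ν) ?_ ?_ ?_ ?_ ?_ <;>
      intro t ht <;> simp only [mem_range, mem_Icc] at ht ⊢
    · omega
    · omega
    · omega
    · omega
    · rw [Nat.cast_sub (by omega), Nat.sub_sub_self (by omega)]
      ring_nf
  · congr 2
    omega

end CompleteHomogeneous

namespace Matrix

variable {R : Type*} [CommRing R]

theorem det_eq_of_forall_row_eq_smul_add_succ {n : ℕ} {A B : Matrix (Fin (n + 1)) (Fin (n + 1)) R}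
    (c : Fin n → R) (A_last : ∀ j, A (Fin.last n) j = B (Fin.last n) j)
    (A_castSucc : ∀ (i : Fin n) (j), A i.castSucc j = B i.castSucc j + c i * A i.succ j) :
    det A = det B := by
  rw [← det_submatrix_equiv_self Fin.revPerm A, ← det_submatrix_equiv_self Fin.revPerm B]
  refine det_eq_of_forall_row_eq_smul_add_pred (fun i => c i.rev) (fun j => A_last _) ?_
  intro i j
  simpa [Fin.rev_succ, Fin.rev_castSucc] using A_castSucc i.rev (Fin.rev j)

theorem det_of_sum_rows {ι α : Type*} [Fintype ι] [DecidableEq ι] (s : ι → Finset α)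
    (a : ι → α → R) (M : ι → α → ι → R) :
    det (of fun i j => ∑ t ∈ s i, a i t * M i t j)
      = ∑ r ∈ Fintype.piFinset s, (∏ i, a i (r i)) * det (of fun i j => M i (r i) j) := by
  have := (detRowAlternating (R := R) (n := ι)).toMultilinearMap.map_sum_finset
    (fun i t => a i t • M i t) s
  simp only [MultilinearMap.map_smul_univ] at this
  convert this using 1
  · congr
    ext i j
    simp [Finset.sum_apply]
  · rfl

end Matrix

section Schur

variable {k l : ℕ}

/-- `ν ∈ Icc (shiftParts lam) lam` says that `ν` interlaces `lam`:
`lam (i + 1) ≤ ν i ≤ lam i`, where the part after the last one counts as `0`. -/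
def shiftParts (lam : Fin (l + 1) → ℕ) : Fin (l + 1) → ℕ :=
  Fin.snoc (fun i : Fin l => lam i.succ) 0

@[simp] lemma shiftParts_castSucc (lam : Fin (l + 1) → ℕ) (i : Fin l) :
    shiftParts lam i.castSucc = lam i.succ :=
  Fin.snoc_castSucc ..

@[simp] lemma shiftParts_last (lam : Fin (l + 1) → ℕ) : shiftParts lam (Fin.last l) = 0 :=
  Fin.snoc_last ..

lemma shiftParts_le {lam : Fin (l + 1) → ℕ} (hlam : Antitone lam) : shiftParts lam ≤ lam := by
  intro i
  induction i using Fin.lastCases with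
  | last => simp
  | cast i => simpa using hlam (Fin.castSucc_le_succ i)

lemma antitone_of_mem_Icc_shiftParts {lam ν : Fin (l + 1) → ℕ}
    (hν : ν ∈ Icc (shiftParts lam) lam) : Antitone ν := by
  rw [mem_Icc] at hν
  refine Fin.antitone_iff_succ_le.2 fun i => ?_
  simpa using (hν.2 i.succ).trans (shiftParts_castSucc lam i ▸ hν.1 i.castSucc)

theorem schur_snoc {lam : Fin (l + 1) → ℕ} (hlam : Antitone lam) (u : Fin k → ℝ) (x : ℝ) :
    schur lam (Fin.snoc u x)
      = ∑ ν ∈ Icc (shiftParts lam) lam, x ^ (∑ i, lam i - ∑ i, ν i) * schur ν u := by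
  have hrow (i j : Fin (l + 1)) := hZ_snoc_eq_sum_Icc_add u x
    ((shiftParts_le hlam i).trans (Nat.le_succ _)) ((j : ℤ) - i)
  rw [schur, Matrix.det_eq_of_forall_row_eq_smul_add_succ
    (B := Matrix.of fun i j => ∑ ν ∈ Icc (shiftParts lam i) (lam i),
      x ^ (lam i - ν) * hZ k (ν - i + j) u)
    (fun i => x ^ (lam i.castSucc + 1 - lam i.succ)), Matrix.det_of_sum_rows, Pi.Icc_eq]
  · refine sum_congr rfl fun ν hν => ?_
    rw [← Pi.Icc_eq, mem_Icc] at hν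
    rw [prod_pow_eq_pow_sum, ← sum_tsub_distrib _ fun i _ => hν.2 i, schur]
  · intro j
    rw [Matrix.of_apply, Matrix.of_apply, ← add_sub_right_comm, add_sub_assoc, hrow,
      shiftParts_last, hZ_of_neg (by simp; omega), mul_zero, add_zero]
    exact sum_congr rfl fun ν _ => by ring_nf
  · intro i j
    rw [Matrix.of_apply, Matrix.of_apply, Matrix.of_apply, ← add_sub_right_comm, add_sub_assoc,
      hrow, shiftParts_castSucc]
    congr 2
    · exact funext fun ν => by ring_nf
    · simp only [Fin.val_succ, Fin.val_castSucc]
      push_cast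
      ring_nf

theorem schur_snoc_zero (lam : Fin l → ℕ) (u : Fin k → ℝ) :
    schur (Fin.snoc lam 0 : Fin (l + 1) → ℕ) u = schur lam u := by
  rw [schur, Matrix.det_succ_row _ (Fin.last l), Fintype.sum_eq_single (Fin.last l)]
  · simp only [Matrix.of_apply, Fin.snoc_last, Fin.val_last, Fin.succAbove_last]
    simp [hZ_zero, ← two_mul, pow_mul, schur, Matrix.submatrix]
  · intro j hj
    have : (j : ℕ) < l := Fin.val_lt_last hj
    rw [Matrix.of_apply, hZ_of_neg (by simp; omega), mul_zero, zero_mul]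

theorem schur_eq_zero_of_part_ne_zero (hk : k ≤ l) {ν : Fin (l + 1) → ℕ}
    (hν : Antitone ν) (hνk : ν ⟨k, by omega⟩ ≠ 0) (u : Fin k → ℝ) : schur ν u = 0 := by
  induction k generalizing ν with
  | zero =>
    have hν0 : ν 0 ≠ 0 := hνk
    refine Matrix.det_eq_zero_of_row_eq_zero 0 fun j => ?_
    rw [Matrix.of_apply, hZ_no_vars_of_pos (by simp; omega)]
  | succ k ih =>
    rw [← Fin.snoc_init_self u, schur_snoc hν]
    refine sum_eq_zero fun μ hμ => ?_
    have hμk : ν ⟨k + 1, by omega⟩ ≤ μ ⟨k, by omega⟩ := by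
      have := (mem_Icc.1 hμ).1 (Fin.castSucc ⟨k, by omega⟩)
      rwa [shiftParts_castSucc] at this
    rw [ih (by omega) (antitone_of_mem_Icc_shiftParts hμ) (by omega), mul_zero]

lemma snoc_zero_mem_Icc_shiftParts {lam : Fin (l + 1) → ℕ} {μ : Fin l → ℕ} :
    (Fin.snoc μ 0 : Fin (l + 1) → ℕ) ∈ Icc (shiftParts lam) lam
      ↔ μ ∈ (Fintype.piFinset fun i : Fin l => range (lam i.castSucc + 1)).filter
          (fun μ => ∀ i : Fin l, lam i.succ ≤ μ i ∧ μ i ≤ lam i.castSucc) := by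
  simp only [mem_Icc, Pi.le_def, Fin.forall_fin_succ', shiftParts_castSucc, shiftParts_last,
    Fin.snoc_castSucc, Fin.snoc_last, le_refl, zero_le, and_true, forall_and, mem_filter,
    Fintype.mem_piFinset, mem_range, Nat.lt_succ_iff]
  tauto

lemma sum_Icc_shiftParts_eq_sum_snoc_zero {M : Type*} [AddCommMonoid M] {lam : Fin (l + 1) → ℕ}
    (F : (Fin (l + 1) → ℕ) → M)
    (hF : ∀ ν ∈ Icc (shiftParts lam) lam, ν (Fin.last l) ≠ 0 → F ν = 0) :
    ∑ ν ∈ Icc (shiftParts lam) lam, F ν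
      = ∑ μ ∈ (Fintype.piFinset fun i : Fin l => range (lam i.castSucc + 1)).filter
          (fun μ => ∀ i : Fin l, lam i.succ ≤ μ i ∧ μ i ≤ lam i.castSucc),
        F (Fin.snoc μ 0) := by
  symm
  rw [← sum_image (g := fun μ : Fin l → ℕ => (Fin.snoc μ 0 : Fin (l + 1) → ℕ))
    fun μ _ μ' _ h => by simpa using congrArg Fin.init h]
  refine sum_subset (fun ν hν => ?_) fun ν hν hν' => hF ν hν fun h0 => hν' ?_
  · obtain ⟨μ, hμ, rfl⟩ := mem_image.1 hν
    exact snoc_zero_mem_Icc_shiftParts.2 hμ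
  · rw [← Fin.snoc_init_self ν, h0] at hν ⊢
    exact mem_image_of_mem _ (snoc_zero_mem_Icc_shiftParts.1 hν)

end Schur

/-- Branching rule for Schur polynomials:
`S_λ(u₁,…,uₙ,x) = Σ_{μ ≺ λ} S_μ(u₁,…,uₙ) · x^{|λ|−|μ|}`, the sum running over all
partitions `μ` interlacing `λ`, i.e. `λ_i ≥ μ_i ≥ λ_{i+1}` for all `i`. -/
theorem schur_branching (n : ℕ) (lam : Fin (n + 1) → ℕ) (hlam : Antitone lam)
    (u : Fin n → ℝ) (x : ℝ) :
    schur lam (Fin.snoc u x : Fin (n + 1) → ℝ)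
      = ∑ μ ∈ (Fintype.piFinset fun i : Fin n => Finset.range (lam i.castSucc + 1)).filter
            (fun μ => ∀ i : Fin n, lam i.succ ≤ μ i ∧ μ i ≤ lam i.castSucc),
          schur μ u * x ^ ((∑ i, lam i) - ∑ i, μ i) := by
  rw [schur_snoc hlam, sum_Icc_shiftParts_eq_sum_snoc_zero]
  · refine sum_congr rfl fun μ _ => ?_
    simp [schur_snoc_zero, Fin.sum_univ_castSucc, mul_comm]
  · intro ν hν hlast
    rw [schur_eq_zero_of_part_ne_zero le_rfl (antitone_of_mem_Icc_shiftParts hν) hlast, mul_zero]
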